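/- Fix an even integer n = 2a with a ≥ 1. The Pareto front of the bi-objective maximization problem AOFZ(x) = (f21(x), f22(x)) over x ∈ {0,1}^n is exactly the set {(n − i, i) : i ∈ {0, 1, …, n/2}}, which has cardinality n/2 + 1. -/
import Mathlib


/-- Zeros in the first half plus ones in the second half. -/
def f21 (a : ℕ) (x : Fin (2 * a) → Bool) : ℕ :=
  ∑ i : Fin (2 * a),
    if ((i : ℕ) < a ∧ x i = false) ∨ (a ≤ (i : ℕ) ∧ x i = true) then 1 else 0

/-- Number of ones in the first half of `x` (indices `i < a`). -/
def f22 (a : ℕ) (x : Fin (2 * a) → Bool) : ℕ :=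
  ∑ i : Fin (2 * a), if (i : ℕ) < a ∧ x i = true then 1 else 0

def AOFZ (a : ℕ) (x : Fin (2 * a) → Bool) : ℕ × ℕ := (f21 a x, f22 a x)

/-- `u` dominates `v` for bi-objective maximization. -/
def dominates (u v : ℕ × ℕ) : Prop := (v.1 ≤ u.1 ∧ v.2 ≤ u.2) ∧ u ≠ v

/-- Pareto set (maximization) of an objective `F` on bit strings of length `2a`. -/
def paretoSet (a : ℕ) (F : (Fin (2 * a) → Bool) → ℕ × ℕ) : Set (Fin (2 * a) → Bool) :=
  {x | ¬ ∃ y : Fin (2 * a) → Bool, dominates (F y) (F x)}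

def wit (a i : ℕ) : Fin (2 * a) → Bool := fun j => decide ((j : ℕ) < i ∨ a ≤ (j : ℕ))

lemma f22_wit (a i : ℕ) (hi : i ≤ a) : f22 a (wit a i) = i := by
  unfold f22 wit
  calc ∑ j : Fin (2 * a),
        (if (j : ℕ) < a ∧ decide ((j : ℕ) < i ∨ a ≤ (j : ℕ)) = true then 1 else 0)
      = ∑ j : Fin (2 * a), (fun k : ℕ => if k < i then 1 else 0) (j : ℕ) := by
        refine Finset.sum_congr rfl fun j _ => ?_
        simp only [decide_eq_true_eq]
        split_ifs <;> omega
    _ = ∑ j ∈ Finset.range (2 * a), if j < i then 1 else 0 :=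
        Fin.sum_univ_eq_sum_range (fun k : ℕ => if k < i then 1 else 0) (2 * a)
    _ = ((Finset.range (2 * a)).filter (fun j => j < i)).card :=
        (Finset.card_filter _ _).symm
    _ = i := by
        have : (Finset.range (2 * a)).filter (fun j => j < i) = Finset.range i := by
          ext j; simp [Finset.mem_filter]; omega
        rw [this, Finset.card_range]

lemma f21_wit (a i : ℕ) (hi : i ≤ a) : f21 a (wit a i) = 2 * a - i := by
  unfold f21 wit
  calc ∑ j : Fin (2 * a),
        (if ((j : ℕ) < a ∧ decide ((j : ℕ) < i ∨ a ≤ (j : ℕ)) = false)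
          ∨ (a ≤ (j : ℕ) ∧ decide ((j : ℕ) < i ∨ a ≤ (j : ℕ)) = true) then 1 else 0)
      = ∑ j : Fin (2 * a), (fun k : ℕ => if i ≤ k then 1 else 0) (j : ℕ) := by
        refine Finset.sum_congr rfl fun j _ => ?_
        simp only [decide_eq_true_eq, decide_eq_false_iff_not]
        split_ifs <;> omega
    _ = ∑ j ∈ Finset.range (2 * a), if i ≤ j then 1 else 0 :=
        Fin.sum_univ_eq_sum_range (fun k : ℕ => if i ≤ k then 1 else 0) (2 * a)
    _ = ((Finset.range (2 * a)).filter (fun j => i ≤ j)).card :=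
        (Finset.card_filter _ _).symm
    _ = 2 * a - i := by
        have : (Finset.range (2 * a)).filter (fun j => i ≤ j) = Finset.Ico i (2 * a) := by
          ext j; simp [Finset.mem_filter, Finset.mem_Ico]; omega
        rw [this, Nat.card_Ico]

lemma sum_le (a : ℕ) (x : Fin (2 * a) → Bool) : f21 a x + f22 a x ≤ 2 * a := by
  unfold f21 f22
  rw [← Finset.sum_add_distrib]
  calc _ ≤ ∑ _j : Fin (2 * a), 1 := by
        apply Finset.sum_le_sum
        intro j _
        rcases h : x j <;> split_ifs with h1 h2 <;> simp_all <;> omega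
    _ = 2 * a := by simp

lemma f22_le (a : ℕ) (x : Fin (2 * a) → Bool) : f22 a x ≤ a := by
  have h := sum_le a x
  -- need f22 ≤ a, not from sum; prove directly
  unfold f22
  calc ∑ j : Fin (2 * a), (if (j : ℕ) < a ∧ x j = true then 1 else 0)
      ≤ ∑ j : Fin (2 * a), (fun k : ℕ => if k < a then 1 else 0) (j : ℕ) := by
        apply Finset.sum_le_sum
        intro j _
        split_ifs with h1 h2 <;> simp_all
    _ = ∑ j ∈ Finset.range (2 * a), if j < a then 1 else 0 :=
        Fin.sum_univ_eq_sum_range (fun k : ℕ => if k < a then 1 else 0) (2 * a)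
    _ = ((Finset.range (2 * a)).filter (fun j => j < a)).card :=
        (Finset.card_filter _ _).symm
    _ = a := by
        have : (Finset.range (2 * a)).filter (fun j => j < a) = Finset.range a := by
          ext j; simp [Finset.mem_filter]; omega
        rw [this, Finset.card_range]




lemma wit_pareto (a i : ℕ) (hi : i ≤ a) : wit a i ∈ paretoSet a (AOFZ a) := by
  rintro ⟨z, ⟨h1, h2⟩, hne⟩
  simp only [AOFZ, f21_wit a i hi, f22_wit a i hi] at h1 h2 hne
  have hz := sum_le a z
  apply hne
  have e1 : f21 a z = 2 * a - i := by omega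
  have e2 : f22 a z = i := by omega
  rw [e1, e2]

theorem aofz_pareto_front (a : ℕ) (ha : 1 ≤ a) :
    AOFZ a '' paretoSet a (AOFZ a) = {p : ℕ × ℕ | ∃ i ≤ a, p = (2 * a - i, i)} ∧
    (AOFZ a '' paretoSet a (AOFZ a)).ncard = a + 1 := by
  have hset : AOFZ a '' paretoSet a (AOFZ a) = {p : ℕ × ℕ | ∃ i ≤ a, p = (2 * a - i, i)} := by
    ext p
    constructor
    · rintro ⟨x, hx, rfl⟩
      refine ⟨f22 a x, f22_le a x, ?_⟩
      have hsum := sum_le a x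
      have hnd : ¬ dominates (AOFZ a (wit a (f22 a x))) (AOFZ a x) := fun h => hx ⟨_, h⟩
      simp only [dominates, AOFZ, f21_wit a _ (f22_le a x), f22_wit a _ (f22_le a x),
        not_and, ne_eq, not_not] at hnd
      have := hnd ⟨by omega, le_refl _⟩
      simp only [AOFZ, Prod.mk.injEq] at this ⊢
      exact ⟨this.1.symm, trivial⟩
    · rintro ⟨i, hi, rfl⟩
      exact ⟨wit a i, wit_pareto a i hi, by simp [AOFZ, f21_wit a i hi, f22_wit a i hi]⟩
  refine ⟨hset, ?_⟩
  rw [hset]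
  have h2 : {p : ℕ × ℕ | ∃ i ≤ a, p = (2 * a - i, i)}
      = (fun i : ℕ => (2 * a - i, i)) '' Set.Iic a := by
    ext p
    simp only [Set.mem_setOf_eq, Set.mem_image, Set.mem_Iic]
    constructor
    · rintro ⟨i, hi, rfl⟩; exact ⟨i, hi, rfl⟩
    · rintro ⟨i, hi, rfl⟩; exact ⟨i, hi, rfl⟩
  rw [h2, Set.ncard_image_of_injective _ (fun i j h => by simpa using congrArg Prod.snd h),
    ← Finset.coe_Iic, Set.ncard_coe_finset, Nat.card_Iic]
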